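/- Let A = [[α, β], [γ, δ]] be a real 2×2 matrix with determinant 1 (A ∈ SL(2,ℝ)), and define the complex numbers p := (α − iβ + iγ + δ)/2 and q := (α + iβ + iγ − δ)/2. Then: (i) A is symmetric and positive definite if and only if p is real and p > 0. (ii) In that case, τ := q/p satisfies |τ| < 1, one has 1/p = √(1 − |τ|²), and A = (1 − |τ|²)^{−1/2} · [[1 + Re τ, Im τ], [Im τ, 1 − Re τ]]. (iii) Conversely, for every τ ∈ ℂ with |τ| < 1, the matrix A^τ := (1 − |τ|²)^{−1/2} · [[1 + Re τ, Im τ], [Im τ, 1 − Re τ]] is the unique symmetric positive-definite element of SL(2,ℝ) whose associated ratio q/p equals τ. -/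

import Mathlib

/-!
Writing `A = [[α, β], [γ, δ]]`, one has `Re p = tr A / 2`, `Im p = (γ - β) / 2` and
`|p|² - |q|² = det A`. So `A` is symmetric exactly when `p` is real, and a symmetric `2 × 2`
matrix of positive determinant is positive definite exactly when its trace is positive
(complete the square in the quadratic form). For `A ∈ SL(2,ℝ)` this gives
`1 - |q/p|² = 1/|p|²`, and when `p > 0` the entries `α, δ = p ± Re q`, `β = γ = Im q` are
`p · [[1 + Re τ, Im τ], [Im τ, 1 - Re τ]]` with `τ = q/p`.
-/

open Matrix

noncomputable section

/-- The complex number `p = (α - iβ + iγ + δ)/2` in the complex-variables representation of a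
real 2×2 matrix `A = [[α, β], [γ, δ]]` (the map `z ↦ p z + q conj z`). -/
def pOf (A : Matrix (Fin 2) (Fin 2) ℝ) : ℂ :=
  (((A 0 0 : ℝ) : ℂ) - Complex.I * ((A 0 1 : ℝ) : ℂ) + Complex.I * ((A 1 0 : ℝ) : ℂ) +
      ((A 1 1 : ℝ) : ℂ)) / 2

/-- The complex number `q = (α + iβ + iγ - δ)/2` in the complex-variables representation of a
real 2×2 matrix `A = [[α, β], [γ, δ]]`. -/
def qOf (A : Matrix (Fin 2) (Fin 2) ℝ) : ℂ :=
  (((A 0 0 : ℝ) : ℂ) + Complex.I * ((A 0 1 : ℝ) : ℂ) + Complex.I * ((A 1 0 : ℝ) : ℂ) -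
      ((A 1 1 : ℝ) : ℂ)) / 2

/-- The positive symmetric matrix
`A^τ = (1-|τ|²)^{-1/2} [[1 + Re τ, Im τ], [Im τ, 1 - Re τ]]` associated to `τ` in the unit
disk. -/
def Amatrix (τ : ℂ) : Matrix (Fin 2) (Fin 2) ℝ :=
  (Real.sqrt (1 - ‖τ‖ ^ 2))⁻¹ • !![1 + τ.re, τ.im; τ.im, 1 - τ.re]

namespace Matrix

variable {R : Type*} [Field R] [LinearOrder R] [IsStrictOrderedRing R] [StarRing R] [TrivialStar R]

theorem IsSymm.posDef_iff_trace_pos_of_det_pos {A : Matrix (Fin 2) (Fin 2) R} (hS : A.IsSymm)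
    (hdet : 0 < A.det) : A.PosDef ↔ 0 < A.trace := by
  refine ⟨PosDef.trace_pos, fun htr => ?_⟩
  have h10 : A 1 0 = A 0 1 := hS.apply 0 1
  rw [det_fin_two, h10] at hdet
  rw [trace_fin_two] at htr
  have h00 : 0 < A 0 0 := by nlinarith [sq_nonneg (A 0 1)]
  refine posDef_iff_dotProduct_mulVec.2 ⟨isHermitian_iff_isSymm.2 hS, fun x hx => ?_⟩
  have hsq : A 0 0 * (star x ⬝ᵥ (A *ᵥ x)) =
      (A 0 0 * x 0 + A 0 1 * x 1) ^ 2 + (A 0 0 * A 1 1 - A 0 1 * A 0 1) * x 1 ^ 2 := by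
    simp only [star_trivial, dotProduct, mulVec, Fin.sum_univ_two, h10]
    ring
  refine pos_of_mul_pos_right (hsq ▸ ?_) h00.le
  rcases eq_or_ne (x 1) 0 with h1 | h1
  · have h0 : x 0 ≠ 0 := fun h0 => hx (funext fun i => by fin_cases i <;> simp [h0, h1])
    simpa [h1] using sq_pos_of_ne_zero (mul_ne_zero h00.ne' h0)
  · nlinarith [sq_nonneg (A 0 0 * x 0 + A 0 1 * x 1), sq_pos_of_ne_zero h1]

end Matrix

section ComplexParameters

variable (A : Matrix (Fin 2) (Fin 2) ℝ)

@[simp] lemma pOf_re : (pOf A).re = (A 0 0 + A 1 1) / 2 := by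
  simp [pOf]

@[simp] lemma pOf_im : (pOf A).im = (A 1 0 - A 0 1) / 2 := by
  simp [pOf]
  ring

@[simp] lemma qOf_re : (qOf A).re = (A 0 0 - A 1 1) / 2 := by
  simp [qOf]

@[simp] lemma qOf_im : (qOf A).im = (A 0 1 + A 1 0) / 2 := by
  simp [qOf]

lemma normSq_pOf_sub_normSq_qOf : Complex.normSq (pOf A) - Complex.normSq (qOf A) = A.det := by
  simp only [Complex.normSq_apply, pOf_re, pOf_im, qOf_re, qOf_im, det_fin_two]
  ring

lemma pOf_im_eq_zero_iff_isSymm : (pOf A).im = 0 ↔ A.IsSymm := by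
  simp only [pOf_im, IsSymm.ext_iff, Fin.forall_fin_two, div_eq_zero_iff, sub_eq_zero]
  grind

lemma pOf_ne_zero_of_det_pos (hdet : 0 < A.det) : pOf A ≠ 0 := by
  rw [← Complex.normSq_pos]
  linarith [normSq_pOf_sub_normSq_qOf A, Complex.normSq_nonneg (qOf A)]

lemma one_sub_norm_qOf_div_pOf_sq (hp : pOf A ≠ 0) :
    1 - ‖qOf A / pOf A‖ ^ 2 = A.det / ‖pOf A‖ ^ 2 := by
  rw [← normSq_pOf_sub_normSq_qOf, norm_div, div_pow, ← Complex.normSq_eq_norm_sq,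
    ← Complex.normSq_eq_norm_sq, sub_div, div_self (Complex.normSq_pos.2 hp).ne']

lemma norm_qOf_div_pOf_lt_one (hdet : 0 < A.det) : ‖qOf A / pOf A‖ < 1 := by
  have hp := pOf_ne_zero_of_det_pos A hdet
  have h : 0 < 1 - ‖qOf A / pOf A‖ ^ 2 := by
    rw [one_sub_norm_qOf_div_pOf_sq A hp]
    exact div_pos hdet (pow_pos (norm_pos_iff.2 hp) 2)
  nlinarith [norm_nonneg (qOf A / pOf A)]

lemma sqrt_one_sub_norm_qOf_div_pOf_sq (hdet : A.det = 1) :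
    √(1 - ‖qOf A / pOf A‖ ^ 2) = ‖pOf A‖⁻¹ := by
  rw [one_sub_norm_qOf_div_pOf_sq A (pOf_ne_zero_of_det_pos A (hdet ▸ one_pos)), hdet,
    one_div, ← inv_pow, Real.sqrt_sq (by positivity)]

theorem isSymm_and_posDef_iff_of_det_pos (hdet : 0 < A.det) :
    A.IsSymm ∧ A.PosDef ↔ (pOf A).im = 0 ∧ 0 < (pOf A).re := by
  rw [pOf_im_eq_zero_iff_isSymm]
  refine and_congr_right fun hS => ?_
  rw [hS.posDef_iff_trace_pos_of_det_pos hdet, trace_fin_two, pOf_re,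
    div_pos_iff_of_pos_right two_pos]

variable {A}

lemma pOf_eq_norm_of_isSymm (hS : A.IsSymm) (hp : 0 < (pOf A).re) :
    pOf A = (‖pOf A‖ : ℂ) := by
  have him : (pOf A).im = 0 := (pOf_im_eq_zero_iff_isSymm A).2 hS
  have hre : ‖pOf A‖ = (pOf A).re := by rw [← Complex.abs_re_eq_norm.2 him, abs_of_pos hp]
  exact Complex.ext (by rw [Complex.ofReal_re, hre]) (by rw [Complex.ofReal_im, him])

lemma inv_pOf_eq_sqrt_one_sub_norm_qOf_div_pOf_sq (hdet : A.det = 1) (hS : A.IsSymm)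
    (hp : 0 < (pOf A).re) : (pOf A)⁻¹ = (√(1 - ‖qOf A / pOf A‖ ^ 2) : ℂ) := by
  rw [sqrt_one_sub_norm_qOf_div_pOf_sq A hdet, Complex.ofReal_inv, ← pOf_eq_norm_of_isSymm hS hp]

lemma eq_Amatrix_qOf_div_pOf (hdet : A.det = 1) (hS : A.IsSymm) (hp : 0 < (pOf A).re) :
    A = Amatrix (qOf A / pOf A) := by
  have hpr := pOf_eq_norm_of_isSymm hS hp
  have hr0 : ‖pOf A‖ ≠ 0 := norm_ne_zero_iff.2 (pOf_ne_zero_of_det_pos A (hdet ▸ one_pos))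
  rw [Amatrix, sqrt_one_sub_norm_qOf_div_pOf_sq A hdet, inv_inv]
  have hr : ‖pOf A‖ = (A 0 0 + A 1 1) / 2 := by simpa using (congrArg Complex.re hpr).symm
  set r := ‖pOf A‖
  have h10 : A 1 0 = A 0 1 := hS.apply 0 1
  rw [hpr, Complex.div_ofReal_re, Complex.div_ofReal_im]
  ext i j
  fin_cases i <;> fin_cases j <;>
    simp only [Fin.zero_eta, Fin.mk_one, Fin.isValue, qOf_re, qOf_im, h10, add_self_div_two,
      Matrix.smul_apply, of_apply, cons_val', cons_val_zero, cons_val_one, cons_val_fin_one,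
      smul_eq_mul] <;>
    field_simp <;> linarith

end ComplexParameters

section Amatrix

lemma one_sub_norm_sq_pos {τ : ℂ} (hτ : ‖τ‖ < 1) : 0 < 1 - ‖τ‖ ^ 2 :=
  sub_pos.2 (pow_lt_one₀ (norm_nonneg τ) hτ two_ne_zero)

variable (τ : ℂ)

lemma pOf_Amatrix : pOf (Amatrix τ) = ((√(1 - ‖τ‖ ^ 2))⁻¹ : ℝ) := by
  apply Complex.ext <;>
  simp only [pOf_re, pOf_im, Amatrix, Matrix.smul_apply, of_apply, cons_val', cons_val_zero,
    cons_val_one, cons_val_fin_one, smul_eq_mul, Fin.isValue, Complex.ofReal_re,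
    Complex.ofReal_im] <;>
  ring

lemma qOf_Amatrix : qOf (Amatrix τ) = ((√(1 - ‖τ‖ ^ 2))⁻¹ : ℝ) * τ := by
  apply Complex.ext <;>
  simp only [qOf_re, qOf_im, Amatrix, Matrix.smul_apply, of_apply, cons_val', cons_val_zero,
    cons_val_one, cons_val_fin_one, smul_eq_mul, Fin.isValue, Complex.re_ofReal_mul,
    Complex.im_ofReal_mul] <;>
  ring

lemma isSymm_Amatrix : (Amatrix τ).IsSymm :=
  (pOf_im_eq_zero_iff_isSymm _).1 (by simp [pOf_Amatrix])

variable {τ}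

lemma qOf_Amatrix_div_pOf_Amatrix (hτ : ‖τ‖ < 1) :
    qOf (Amatrix τ) / pOf (Amatrix τ) = τ := by
  rw [qOf_Amatrix, pOf_Amatrix, mul_div_cancel_left₀]
  simpa using (Real.sqrt_pos.2 (one_sub_norm_sq_pos hτ)).ne'

lemma det_Amatrix (hτ : ‖τ‖ < 1) : (Amatrix τ).det = 1 := by
  have hs := one_sub_norm_sq_pos hτ
  rw [← normSq_pOf_sub_normSq_qOf, pOf_Amatrix, qOf_Amatrix, map_mul, Complex.normSq_ofReal,
    Complex.normSq_eq_norm_sq τ, ← mul_one_sub, ← sq, inv_pow, Real.sq_sqrt hs.le,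
    inv_mul_cancel₀ hs.ne']

lemma posDef_Amatrix (hτ : ‖τ‖ < 1) : (Amatrix τ).PosDef := by
  refine ((isSymm_and_posDef_iff_of_det_pos _ ?_).2 ⟨?_, ?_⟩).2
  · rw [det_Amatrix hτ]
    exact one_pos
  · simp [pOf_Amatrix]
  · simpa [pOf_Amatrix] using one_sub_norm_sq_pos hτ

end Amatrix

/-- for `A ∈ SL(2,ℝ)` with associated complex parameters `p, q`:
(i) `A` is symmetric positive definite iff `p` is real and positive; (ii) in that case
`τ = q/p` satisfies `|τ| < 1`, `1/p = √(1-|τ|²)` and `A = A^τ`; (iii) conversely every `τ` in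
the unit disk arises from a unique symmetric positive-definite element of `SL(2,ℝ)`. -/
theorem sl2_positive_symmetric_parametrization (A : Matrix (Fin 2) (Fin 2) ℝ)
    (hA : A.det = 1) :
    ((A.IsSymm ∧ A.PosDef) ↔ ((pOf A).im = 0 ∧ 0 < (pOf A).re)) ∧
    (A.IsSymm → A.PosDef →
      ‖qOf A / pOf A‖ < 1 ∧
      (pOf A)⁻¹ = ((Real.sqrt (1 - ‖qOf A / pOf A‖ ^ 2) : ℝ) : ℂ) ∧
      A = Amatrix (qOf A / pOf A)) ∧
    (∀ τ : ℂ, ‖τ‖ < 1 →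
      (Amatrix τ).det = 1 ∧ (Amatrix τ).IsSymm ∧ (Amatrix τ).PosDef ∧
      qOf (Amatrix τ) / pOf (Amatrix τ) = τ ∧
      ∀ B : Matrix (Fin 2) (Fin 2) ℝ, B.det = 1 → B.IsSymm → B.PosDef →
        qOf B / pOf B = τ → B = Amatrix τ) := by
  have hdet : 0 < A.det := hA ▸ one_pos
  refine ⟨isSymm_and_posDef_iff_of_det_pos A hdet, fun hS hPD => ?_, fun τ hτ => ?_⟩
  · have hp := ((isSymm_and_posDef_iff_of_det_pos A hdet).1 ⟨hS, hPD⟩).2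
    exact ⟨norm_qOf_div_pOf_lt_one A hdet, inv_pOf_eq_sqrt_one_sub_norm_qOf_div_pOf_sq hA hS hp,
      eq_Amatrix_qOf_div_pOf hA hS hp⟩
  refine ⟨det_Amatrix hτ, isSymm_Amatrix τ, posDef_Amatrix hτ,
    qOf_Amatrix_div_pOf_Amatrix hτ, ?_⟩
  rintro B hB hBS hBPD rfl
  have hp := ((isSymm_and_posDef_iff_of_det_pos B (hB ▸ one_pos)).1 ⟨hBS, hBPD⟩).2
  exact eq_Amatrix_qOf_div_pOf hB hBS hp

end
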